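/- arXiv:2403.13878 — 2 statements merged into one kernel-verified Lean document; each statement's English description precedes it below -/
import Mathlib

section
/- For all nonnegative integers n, the sum over p from 0 to n of p * binom(2p, p) * binom(2n-2p, n-p) equals n * 2^{2n-1}. -/
open Finset

private def a (p : ℕ) : ℕ := Nat.choose (2 * p) p

private def S (n : ℕ) : ℕ := ∑ p ∈ range (n + 1), a p * a (n - p)

private def T (n : ℕ) : ℕ := ∑ p ∈ range (n + 1), p * a p * a (n - p)

private lemma a_rec (q : ℕ) : (q + 1) * a (q + 1) = (4 * q + 2) * a q := by
  have h := Nat.succ_mul_centralBinom_succ q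
  simp only [Nat.centralBinom_eq_two_mul_choose] at h
  show (q + 1) * (2 * (q + 1)).choose (q + 1) = (4 * q + 2) * (2 * q).choose q
  rw [h]; ring

private lemma sym (n : ℕ) : 2 * T n = n * S n := by
  have h := Finset.sum_range_reflect (fun p => p * a p * a (n - p)) (n + 1)
  have h' : T n = ∑ p ∈ range (n + 1), (n - p) * (a p * a (n - p)) := by
    rw [T, ← h]
    apply Finset.sum_congr rfl
    intro p hp
    simp only [Finset.mem_range] at hp
    have hp' : p ≤ n := Nat.lt_succ_iff.mp hp
    have h1 : n + 1 - 1 - p = n - p := by omega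
    rw [h1, Nat.sub_sub_self hp']
    ring
  have hsum : T n + T n = ∑ p ∈ range (n + 1), (p + (n - p)) * (a p * a (n - p)) := by
    nth_rewrite 2 [h']
    rw [T, ← Finset.sum_add_distrib]
    apply Finset.sum_congr rfl
    intro p _
    ring
  have heq : ∑ p ∈ range (n + 1), (p + (n - p)) * (a p * a (n - p)) = n * S n := by
    rw [S, Finset.mul_sum]
    apply Finset.sum_congr rfl
    intro p hp
    simp only [Finset.mem_range] at hp
    have : p + (n - p) = n := by omega
    rw [this]
  omega

private lemma S_eq (n : ℕ) : S n = 4 ^ n := by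
  induction n with
  | zero => simp [S, a]
  | succ n ih =>
    have shift : T (n + 1) = ∑ q ∈ range (n + 1), (q + 1) * a (q + 1) * a (n - q) := by
      unfold T
      rw [Finset.sum_range_succ']
      simp only [Nat.zero_mul, zero_mul, Nat.add_zero]
      apply Finset.sum_congr rfl
      intro q hq
      simp only [Finset.mem_range] at hq
      congr 2
      omega
    have step : T (n + 1) = 4 * T n + 2 * S n := by
      rw [shift]
      have hc : ∀ q ∈ range (n + 1), (q + 1) * a (q + 1) * a (n - q)
          = 4 * (q * a q * a (n - q)) + 2 * (a q * a (n - q)) := by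
        intro q _
        rw [a_rec]
        ring
      rw [Finset.sum_congr rfl hc, Finset.sum_add_distrib, ← Finset.mul_sum,
        ← Finset.mul_sum]
      rfl
    have hT : 2 * T n = n * S n := sym n
    have key : (n + 1) * S (n + 1) = (n + 1) * (4 * S n) := by
      rw [← sym, step]
      calc 2 * (4 * T n + 2 * S n) = 4 * (2 * T n) + 4 * S n := by ring
        _ = 4 * (n * S n) + 4 * S n := by rw [hT]
        _ = (n + 1) * (4 * S n) := by ring
    have := Nat.eq_of_mul_eq_mul_left (Nat.succ_pos n) key
    rw [this, ih]
    ring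

theorem stmt4 (n : ℕ) :
    ∑ p ∈ range (n + 1), p * Nat.choose (2 * p) p * Nat.choose (2 * n - 2 * p) (n - p)
      = n * 2 ^ (2 * n - 1) := by
  have hT : ∑ p ∈ range (n + 1), p * Nat.choose (2 * p) p * Nat.choose (2 * n - 2 * p) (n - p)
      = T n := by
    apply Finset.sum_congr rfl
    intro p hp
    simp only [Finset.mem_range] at hp
    have : 2 * n - 2 * p = 2 * (n - p) := by omega
    rw [this]; rfl
  rw [hT]
  have h2 : 2 * T n = n * 4 ^ n := by rw [sym, S_eq]
  rcases Nat.eq_zero_or_pos n with h | h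
  · subst h; simpa using h2
  · apply Nat.eq_of_mul_eq_mul_left (show 0 < 2 by norm_num)
    rw [h2]
    calc n * 4 ^ n = n * 2 ^ (2 * n) := by rw [pow_mul]; norm_num
      _ = n * 2 ^ (2 * n - 1 + 1) := by rw [show 2 * n - 1 + 1 = 2 * n by omega]
      _ = 2 * (n * 2 ^ (2 * n - 1)) := by rw [pow_succ]; ring
end

section
/- For all positive integers n, sum over p from 0 to n-1 of 2*n * binom(n-1, p) * (2p+1) * (2(n-p-1)+1) * (2p-1)!! * (2(n-p-1)-1)!! equals (2n)!! * (4*n*(n-1)/8 + n). -/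
open Finset

private def aa (p : ℕ) : ℚ := ((2*p+1).doubleFactorial : ℚ)

private lemma aa_succ (p : ℕ) : aa (p+1) = (2*(p:ℚ)+3) * aa p := by
  show ((2*(p+1)+1).doubleFactorial : ℚ) = _
  have h : 2*(p+1)+1 = (2*p+1)+2 := by ring
  rw [h, Nat.doubleFactorial_add_two, aa]
  push_cast
  ring

private lemma aa_eq (p : ℕ) :
    (2*(p:ℚ)+1) * ((2*p-1).doubleFactorial : ℚ) = aa p := by
  cases p with
  | zero => simp [aa, Nat.doubleFactorial]
  | succ q =>
      have h : 2*(q+1)-1 = 2*q+1 := by omega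
      rw [h, aa_succ]
      unfold aa
      push_cast
      ring

private def TT (m : ℕ) : ℚ := ∑ p ∈ range (m+1), (m.choose p : ℚ) * aa p * aa (m - p)

private lemma TT_succ (m : ℕ) : TT (m+1) = (2*(m:ℚ)+6) * TT m := by
  unfold TT
  rw [Finset.sum_range_succ']
  have h1 : ∀ i ∈ range (m+1),
      (((m+1).choose (i+1) : ℚ)) * aa (i+1) * aa (m+1-(i+1))
        = (m.choose i : ℚ) * aa (i+1) * aa (m-i)
          + (m.choose (i+1) : ℚ) * aa (i+1) * aa (m+1-(i+1)) := by
    intro i _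
    have : (m+1).choose (i+1) = m.choose i + m.choose (i+1) := Nat.choose_succ_succ m i
    have h2 : m+1-(i+1) = m - i := by omega
    rw [this, h2]
    push_cast
    ring
  rw [Finset.sum_congr rfl h1, Finset.sum_add_distrib]
  -- second sum plus the p=0 term equals ∑_{q<m+1} C(m,q) aa q aa (m+1-q)
  have key : (∑ i ∈ range (m+1), (m.choose (i+1) : ℚ) * aa (i+1) * aa (m+1-(i+1)))
        + ((m+1).choose 0 : ℚ) * aa 0 * aa (m+1-0)
      = ∑ q ∈ range (m+1), (m.choose q : ℚ) * aa q * aa (m+1-q) := by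
    have := Finset.sum_range_succ' (fun q => (m.choose q : ℚ) * aa q * aa (m+1-q)) (m+1)
    rw [Finset.sum_range_succ] at this
    simp only [Nat.choose_succ_self, Nat.cast_zero, zero_mul] at this
    simpa using this.symm
  rw [add_assoc, key]
  -- now combine the two remaining sums
  have h3 : ∀ i ∈ range (m+1),
      (m.choose i : ℚ) * aa (i+1) * aa (m-i)
        + (m.choose i : ℚ) * aa i * aa (m+1-i)
      = (2*(m:ℚ)+6) * ((m.choose i : ℚ) * aa i * aa (m-i)) := by
    intro i hi
    have hi' : i ≤ m := by simpa [Nat.lt_succ_iff] using hi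
    have h4 : m+1-i = (m-i)+1 := by omega
    rw [h4, aa_succ, aa_succ]
    have h5 : ((m - i : ℕ) : ℚ) = (m:ℚ) - i := by
      push_cast [Nat.cast_sub hi']; ring
    rw [h5]
    ring
  rw [← Finset.sum_add_distrib, Finset.sum_congr rfl h3, ← Finset.mul_sum]

private lemma TT_closed (m : ℕ) : TT m = 2^m * ((m+2).factorial : ℚ) / 2 := by
  induction m with
  | zero => norm_num [TT, aa, Nat.doubleFactorial, Nat.factorial]
  | succ k ih =>
      rw [TT_succ, ih]
      have : (k+1+2).factorial = (k+3) * (k+2).factorial := rfl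
      rw [this]
      push_cast
      ring

theorem stmt10 (n : ℕ) (hn : 0 < n) :
    ∑ p ∈ range n,
        (2 * (n : ℚ)) * Nat.choose (n - 1) p * (2 * (p : ℚ) + 1) *
          (2 * ((n - p - 1 : ℕ) : ℚ) + 1) * Nat.doubleFactorial (2 * p - 1) *
          Nat.doubleFactorial (2 * (n - p - 1) - 1)
      = (2 : ℚ) ^ n * n.factorial * (4 * (n : ℚ) * ((n : ℚ) - 1) / 8 + (n : ℚ)) := by
  obtain ⟨m, rfl⟩ := Nat.exists_eq_succ_of_ne_zero hn.ne'
  have hL : ∀ p ∈ range (m+1),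
      (2 * ((m+1 : ℕ) : ℚ)) * ((m+1-1).choose p : ℚ) * (2 * (p : ℚ) + 1) *
          (2 * (((m+1) - p - 1 : ℕ) : ℚ) + 1) * ((2 * p - 1).doubleFactorial : ℚ) *
          ((2 * ((m+1) - p - 1) - 1).doubleFactorial : ℚ)
      = (2 * ((m:ℚ)+1)) * ((m.choose p : ℚ) * aa p * aa (m - p)) := by
    intro p hp
    have h0 : (m+1) - p - 1 = m - p := by omega
    have h1 : m+1-1 = m := rfl
    rw [h0, h1]
    have e1 := aa_eq p
    have e2 := aa_eq (m - p)
    push_cast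
    calc _ = (2 * ((m:ℚ)+1)) * (m.choose p : ℚ) *
            ((2 * (p : ℚ) + 1) * ((2 * p - 1).doubleFactorial : ℚ)) *
            ((2 * ((m - p : ℕ) : ℚ) + 1) * ((2 * (m-p) - 1).doubleFactorial : ℚ)) := by
            push_cast; ring
      _ = _ := by rw [e1, e2]; ring
  rw [Finset.sum_congr rfl hL, ← Finset.mul_sum]
  have : (∑ p ∈ range (m+1), (m.choose p : ℚ) * aa p * aa (m - p)) = TT m := rfl
  rw [this, TT_closed]
  have hf : ((m+2).factorial : ℚ) = ((m:ℚ)+2) * ((m+1).factorial : ℚ) := by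
    rw [Nat.factorial_succ]; push_cast; ring
  rw [hf]
  simp only [Nat.succ_eq_add_one]
  push_cast
  ring
end
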